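/- Let φ be a Schwartz function on ℝ, δ > 0, s ≥ 0 and t ∈ ℝ. Then lim_{n→∞} ‖n^{−δ/2−s} φ(x/n^δ) (cos(nx + 2t) − cos(nx))‖_{H^s} = √2 |sin t| · ‖φ‖_{L²}. -/

import Mathlib

/-!
Writing `cos (n x + 2t) - cos (n x) = i sin t (e^{it} e^{inx} - e^{-it} e^{-inx})`, the Fourier
transform of the `n`-th function consists of two copies of `n^{δ/2-s} ĝ (n^δ ·)`, where `ĝ` is the
transform of `φ`, centred at the frequencies `±n`. The substitution `u = n^δ (ξ - n)` turns the
squared `H^s` norm into `sin² t ∫ w_n(u) |e^{it} ĝ(u) - e^{-it} ĝ(u + 2 n^{1+δ})|² du` with the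
weight `w_n(u) = ((1 + (n + u n^{-δ})²) / n²)^s`. This weight tends to `1` pointwise and, by
Peetre's inequality, is bounded by `4^{|s|} (1 + u²)^{|s|}`. Expanding the square, the two
diagonal terms tend to `‖ĝ‖² = ‖φ‖²` by dominated convergence and Plancherel, while the cross
term tends to `0` because the two bumps drift apart.
-/

open MeasureTheory Filter

/-- The Fourier transform `f̂(ξ) = (2π)^{-1/2} ∫ e^{-iξx} f(x) dx` (unitary convention). -/
noncomputable def fourierHat (f : ℝ → ℂ) (ξ : ℝ) : ℂ :=
  (Real.sqrt (2 * Real.pi) : ℂ)⁻¹ * ∫ x : ℝ, Complex.exp (-(Complex.I * (ξ : ℂ) * (x : ℂ))) * f x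

/-- The `H^s(ℝ)` norm `(∫ (1+ξ²)^s |f̂(ξ)|² dξ)^{1/2}` of a real-valued function. -/
noncomputable def hsNorm (s : ℝ) (f : ℝ → ℝ) : ℝ :=
  (∫ ξ : ℝ, (1 + ξ ^ 2) ^ s * ‖fourierHat (fun x => (f x : ℂ)) ξ‖ ^ 2) ^ (1/2 : ℝ)

/-- Membership in the Sobolev space `H^s(ℝ)`. -/
def memHs (s : ℝ) (f : ℝ → ℝ) : Prop :=
  MeasureTheory.Integrable
    (fun ξ : ℝ => (1 + ξ ^ 2) ^ s * ‖fourierHat (fun x => (f x : ℂ)) ξ‖ ^ 2)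

/-- The `L²(ℝ)` norm. -/
noncomputable def l2Norm (f : ℝ → ℝ) : ℝ := (∫ x : ℝ, (f x) ^ 2) ^ (1/2 : ℝ)

open Complex FourierTransform SchwartzMap

theorem one_add_sq_add_rpow_le (x y s : ℝ) :
    (1 + (x + y) ^ 2) ^ s ≤ 2 ^ |s| * (1 + x ^ 2) ^ s * (1 + y ^ 2) ^ |s| := by
  have key (x y : ℝ) : 1 + (x + y) ^ 2 ≤ 2 * (1 + x ^ 2) * (1 + y ^ 2) := by
    nlinarith [sq_nonneg (x - y), sq_nonneg (x * y)]
  rcases le_total 0 s with hs | hs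
  · rw [abs_of_nonneg hs, ← Real.mul_rpow (by positivity) (by positivity),
      ← Real.mul_rpow (by positivity) (by positivity)]
    exact Real.rpow_le_rpow (by positivity) (key x y) hs
  · -- for `s ≤ 0`, use `key` for `x = (x + y) + (-y)` raised to the power `-s ≥ 0`
    have h := Real.rpow_le_rpow (by positivity) (key (x + y) (-y)) (neg_nonneg.2 hs)
    rw [add_neg_cancel_right, neg_sq, Real.mul_rpow (by positivity) (by positivity),
      Real.mul_rpow (by positivity) (by positivity)] at h
    have hX : 0 < (1 + x ^ 2) ^ (-s) := by positivity
    rw [abs_of_nonpos hs]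
    calc (1 + (x + y) ^ 2) ^ s = ((1 + (x + y) ^ 2) ^ (-s))⁻¹ := by
          rw [Real.rpow_neg (by positivity), inv_inv]
      _ ≤ ((1 + (x + y) ^ 2) ^ (-s))⁻¹ *
            (2 ^ (-s) * (1 + (x + y) ^ 2) ^ (-s) * (1 + y ^ 2) ^ (-s)) / (1 + x ^ 2) ^ (-s) := by
          rw [le_div_iff₀ hX]; gcongr
      _ = 2 ^ (-s) * (1 + x ^ 2) ^ s * (1 + y ^ 2) ^ (-s) := by
          field_simp
          rw [← Real.rpow_add (by positivity), neg_add_cancel, Real.rpow_zero]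

theorem rpow_le_two_rpow_abs {x : ℝ} (h1 : 1 ≤ x) (h2 : x ≤ 2) (s : ℝ) : x ^ s ≤ 2 ^ |s| := by
  rcases le_total 0 s with hs | hs
  · rw [abs_of_nonneg hs]
    exact Real.rpow_le_rpow (by linarith) h2 hs
  · exact (Real.rpow_le_one_of_one_le_of_nonpos h1 hs).trans
      (Real.one_le_rpow (by norm_num) (abs_nonneg s))

theorem tendsto_natCast_rpow_mul_self_atTop {δ : ℝ} (hδ : 0 ≤ δ) :
    Tendsto (fun n : ℕ => (n : ℝ) ^ δ * n) atTop atTop := by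
  refine tendsto_atTop_mono' atTop ?_ tendsto_natCast_atTop_atTop
  filter_upwards [eventually_ge_atTop 1] with n hn
  have hn1 : (1 : ℝ) ≤ n := by exact_mod_cast hn
  exact le_mul_of_one_le_left (by positivity) (Real.one_le_rpow hn1 hδ)

theorem SchwartzMap.integrable_one_add_sq_rpow_mul_norm {F : Type*} [NormedAddCommGroup F]
    [NormedSpace ℝ F] (h : 𝓢(ℝ, F)) (r c : ℝ) :
    Integrable fun u : ℝ => (1 + u ^ 2) ^ r * (c * ‖h u‖) := by
  have hg := Function.hasTemperateGrowth_one_add_norm_sq_rpow ℝ r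
  refine ((smulLeftCLM F (fun u : ℝ => (1 + ‖u‖ ^ 2) ^ r) h).integrable.norm.const_mul c).congr
    (ae_of_all _ fun u => ?_)
  dsimp only
  rw [smulLeftCLM_apply_apply hg, norm_smul, Real.norm_eq_abs, Real.norm_eq_abs, sq_abs,
    abs_of_pos (by positivity)]
  ring

theorem MeasureTheory.Integrable.cexp_mul_of_re_eq_zero {f : ℝ → ℂ} (hf : Integrable f)
    {g : ℝ → ℂ} (hg : Continuous g) (hre : ∀ x, (g x).re = 0) :
    Integrable fun x => exp (g x) * f x :=
  hf.bdd_mul (c := 1) (by fun_prop) (ae_of_all _ fun x => by simp [Complex.norm_exp, hre])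

theorem fourierHat_const_mul (c : ℂ) (f : ℝ → ℂ) (ξ : ℝ) :
    fourierHat (fun x => c * f x) ξ = c * fourierHat f ξ := by
  simp only [fourierHat, mul_left_comm _ c, integral_const_mul]

theorem fourierHat_sub {f g : ℝ → ℂ} (hf : Integrable f) (hg : Integrable g) (ξ : ℝ) :
    fourierHat (fun x => f x - g x) ξ = fourierHat f ξ - fourierHat g ξ := by
  have kernel (h : ℝ → ℂ) (hh : Integrable h) :
      Integrable fun x : ℝ => exp (-(I * ξ * x)) * h x :=
    hh.cexp_mul_of_re_eq_zero (by fun_prop) fun x => by simp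
  simp only [fourierHat, mul_sub, integral_sub (kernel f hf) (kernel g hg)]

theorem fourierHat_exp_mul (f : ℝ → ℂ) (b ξ : ℝ) :
    fourierHat (fun x => exp (b * x * I) * f x) ξ = fourierHat f (ξ - b) := by
  simp only [fourierHat, ← mul_assoc, ← Complex.exp_add]
  congr 2; funext x
  push_cast
  ring_nf

theorem fourierHat_comp_div (f : ℝ → ℂ) {a : ℝ} (ha : 0 < a) (ξ : ℝ) :
    fourierHat (fun x => f (x / a)) ξ = a * fourierHat f (a * ξ) := by
  have h := Measure.integral_comp_div
    (fun y : ℝ => exp (-(I * ((a * ξ : ℝ) : ℂ) * y)) * f y) a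
  rw [abs_of_pos ha, Complex.real_smul] at h
  rw [fourierHat, fourierHat, mul_left_comm, ← h]
  have : (a : ℂ) ≠ 0 := ofReal_ne_zero.mpr ha.ne'
  congr 2; funext x; congr 3
  push_cast
  field_simp

theorem ofReal_cos_add_two_mul_sub_cos (y t : ℝ) :
    ((Real.cos (y + 2 * t) - Real.cos y : ℝ) : ℂ) =
      I * Real.sin t * (exp (t * I) * exp (y * I) - exp (-t * I) * exp (-y * I)) := by
  push_cast
  rw [Complex.cos, Complex.cos, Complex.sin,
    show ((y : ℂ) + 2 * t) * I = y * I + t * I + t * I by ring,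
    show -((y : ℂ) + 2 * t) * I = -y * I + -t * I + -t * I by ring]
  simp only [Complex.exp_add, neg_mul, Complex.exp_neg]
  field_simp
  ring_nf
  rw [I_sq]
  ring

theorem fourierHat_const_mul_comp_div_mul_cos_sub_cos {f : ℝ → ℝ} (hf : Integrable f) {a : ℝ}
    (ha : 0 < a) (c b t ξ : ℝ) :
    fourierHat (fun x => ((c * f (x / a) * (Real.cos (b * x + 2 * t) - Real.cos (b * x)) : ℝ) : ℂ))
        ξ = c * a * I * Real.sin t * (exp (t * I) * fourierHat (fun x => (f x : ℂ)) (a * (ξ - b))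
          - exp (-t * I) * fourierHat (fun x => (f x : ℂ)) (a * (ξ + b))) := by
  have hfa : Integrable fun x => (f (x / a) : ℂ) := (hf.ofReal (𝕜 := ℂ)).comp_div ha.ne'
  have modulate (β : ℝ) : Integrable fun x : ℝ => exp (β * x * I) * (f (x / a) : ℂ) :=
    hfa.cexp_mul_of_re_eq_zero (by fun_prop) fun x => by simp
  have split : (fun x => ((c * f (x / a) * (Real.cos (b * x + 2 * t) - Real.cos (b * x)) : ℝ) : ℂ))
      = fun x : ℝ => (c * I * Real.sin t) * (exp (t * I) * (exp (b * x * I) * (f (x / a) : ℂ))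
          - exp (-t * I) * (exp ((-b : ℝ) * x * I) * (f (x / a) : ℂ))) := by
    funext x
    rw [ofReal_mul, ofReal_mul, ofReal_cos_add_two_mul_sub_cos]
    push_cast
    simp only [neg_mul]
    ring
  rw [split, fourierHat_const_mul, fourierHat_sub ((modulate b).const_mul _)
    ((modulate (-b)).const_mul _), fourierHat_const_mul, fourierHat_const_mul,
    fourierHat_exp_mul, fourierHat_exp_mul, fourierHat_comp_div (fun x => (f x : ℂ)) ha,
    fourierHat_comp_div (fun x => (f x : ℂ)) ha,
    sub_neg_eq_add]
  ring

theorem fourierHat_eq_fourier (f : ℝ → ℂ) (ξ : ℝ) :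
    fourierHat f ξ = (Real.sqrt (2 * Real.pi) : ℂ)⁻¹ * 𝓕 f (ξ / (2 * Real.pi)) := by
  rw [fourierHat, Real.fourier_real_eq_integral_exp_smul]
  congr 1
  refine integral_congr_ae (ae_of_all _ fun x => ?_)
  simp only [smul_eq_mul]
  congr 2
  push_cast
  field_simp

noncomputable def schwartzFourierHat (f : 𝓢(ℝ, ℂ)) : 𝓢(ℝ, ℂ) :=
  (Real.sqrt (2 * Real.pi) : ℂ)⁻¹ • compCLMOfContinuousLinearEquiv ℂ
    (ContinuousLinearEquiv.unitsEquivAut ℝ (Units.mk0 (2 * Real.pi)⁻¹ (by positivity))) (𝓕 f)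

theorem schwartzFourierHat_apply (f : 𝓢(ℝ, ℂ)) (ξ : ℝ) :
    schwartzFourierHat f ξ = fourierHat f ξ := by
  simp [schwartzFourierHat, fourierHat_eq_fourier, div_eq_mul_inv, fourier_coe]

theorem integral_norm_sq_schwartzFourierHat (f : 𝓢(ℝ, ℂ)) :
    ∫ ξ, ‖schwartzFourierHat f ξ‖ ^ 2 = ∫ x, ‖f x‖ ^ 2 := by
  have h2π : 0 < 2 * Real.pi := by positivity
  have hpt (ξ : ℝ) : ‖schwartzFourierHat f ξ‖ ^ 2
      = (2 * Real.pi)⁻¹ * ‖𝓕 f (ξ * (2 * Real.pi)⁻¹)‖ ^ 2 := by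
    simp [schwartzFourierHat, mul_pow, Real.sq_sqrt Real.pi_pos.le]
  rw [integral_congr_ae (ae_of_all _ hpt), integral_const_mul,
    Measure.integral_comp_mul_right (fun ξ => ‖𝓕 f ξ‖ ^ 2), integral_norm_sq_fourier,
    inv_inv, abs_of_pos h2π, smul_eq_mul, inv_mul_cancel_left₀ h2π.ne']

/-- The weight `n^{-2s} (1 + ξ²)^s` in the variable `u = n^δ (ξ - ε n)`. -/
noncomputable def shiftedWeight (s δ ε : ℝ) (n : ℕ) (u : ℝ) : ℝ :=
  ((1 + (ε * n + u / (n : ℝ) ^ δ) ^ 2) / (n : ℝ) ^ 2) ^ s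

section ShiftedWeight

variable {s δ ε : ℝ}

theorem shiftedWeight_le (hδ : 0 ≤ δ) (hε : ε ^ 2 = 1) {n : ℕ} (hn : 1 ≤ n) (u : ℝ) :
    shiftedWeight s δ ε n u ≤ 4 ^ |s| * (1 + u ^ 2) ^ |s| := by
  have hn1 : (1 : ℝ) ≤ n := by exact_mod_cast hn
  have hn2 : (0 : ℝ) < (n : ℝ) ^ 2 := by positivity
  have hv : (u / (n : ℝ) ^ δ) ^ 2 ≤ u ^ 2 := by
    rw [div_pow]
    exact div_le_self (sq_nonneg u) (one_le_pow₀ (Real.one_le_rpow hn1 hδ))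
  have hratio : ((1 + (ε * n) ^ 2) / (n : ℝ) ^ 2) ^ s ≤ 2 ^ |s| := by
    rw [mul_pow, hε, one_mul]
    exact rpow_le_two_rpow_abs ((one_le_div hn2).2 (by linarith))
      ((div_le_iff₀ hn2).2 (by nlinarith)) s
  calc shiftedWeight s δ ε n u
      = (1 + (ε * n + u / (n : ℝ) ^ δ) ^ 2) ^ s / ((n : ℝ) ^ 2) ^ s :=
        Real.div_rpow (by positivity) hn2.le s
    _ ≤ 2 ^ |s| * (1 + (ε * n) ^ 2) ^ s * (1 + (u / (n : ℝ) ^ δ) ^ 2) ^ |s|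
          / ((n : ℝ) ^ 2) ^ s := by
        gcongr; exact one_add_sq_add_rpow_le _ _ s
    _ = 2 ^ |s| * ((1 + (ε * n) ^ 2) / (n : ℝ) ^ 2) ^ s * (1 + (u / (n : ℝ) ^ δ) ^ 2) ^ |s| := by
        rw [Real.div_rpow (by positivity) hn2.le s]; ring
    _ ≤ 2 ^ |s| * 2 ^ |s| * (1 + u ^ 2) ^ |s| := by
        gcongr
    _ = 4 ^ |s| * (1 + u ^ 2) ^ |s| := by
        rw [← Real.mul_rpow (by norm_num) (by norm_num)]; norm_num

theorem tendsto_shiftedWeight (hδ : 0 ≤ δ) (hε : ε ^ 2 = 1) (u : ℝ) :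
    Tendsto (fun n : ℕ => shiftedWeight s δ ε n u) atTop (nhds 1) := by
  have hnδ := tendsto_natCast_rpow_mul_self_atTop hδ
  have hbase : Tendsto (fun n : ℕ => ((n : ℝ) ^ 2)⁻¹ + (ε + u / ((n : ℝ) ^ δ * n)) ^ 2)
      atTop (nhds 1) := by
    have h := (((tendsto_pow_atTop two_ne_zero).comp
      tendsto_natCast_atTop_atTop).inv_tendsto_atTop).add
      (((tendsto_const_nhds (x := ε)).add ((tendsto_const_nhds (x := u)).div_atTop hnδ)).pow 2)
    rwa [add_zero, zero_add, hε] at h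
  have := hbase.rpow_const (p := s) (Or.inl one_ne_zero)
  rw [Real.one_rpow] at this
  refine this.congr' ?_
  filter_upwards [eventually_ge_atTop 1] with n hn
  have : (0 : ℝ) < n := by exact_mod_cast hn
  rw [shiftedWeight]
  congr 1
  field_simp

theorem measurable_shiftedWeight (s δ ε : ℝ) (n : ℕ) : Measurable (shiftedWeight s δ ε n) := by
  unfold shiftedWeight; fun_prop

theorem norm_shiftedWeight_mul_le (hδ : 0 ≤ δ) (hε : ε ^ 2 = 1) {n : ℕ} (hn : 1 ≤ n) {x g : ℝ}
    (hx : |x| ≤ g) (u : ℝ) :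
    ‖shiftedWeight s δ ε n u * x‖ ≤ 4 ^ |s| * ((1 + u ^ 2) ^ |s| * g) := by
  rw [Real.norm_eq_abs, abs_mul, abs_of_nonneg (by unfold shiftedWeight; positivity), ← mul_assoc]
  exact mul_le_mul (shiftedWeight_le hδ hε hn u) hx (abs_nonneg x) (by positivity)

theorem integrable_shiftedWeight_mul (hδ : 0 ≤ δ) (hε : ε ^ 2 = 1) {n : ℕ} (hn : 1 ≤ n)
    {g : ℝ → ℝ} (hg : Integrable fun u => (1 + u ^ 2) ^ |s| * g u) {F : ℝ → ℝ}
    (hF : AEStronglyMeasurable F) (hFg : ∀ u, |F u| ≤ g u) :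
    Integrable fun u => shiftedWeight s δ ε n u * F u :=
  (hg.const_mul (4 ^ |s|)).mono' ((measurable_shiftedWeight s δ ε n).aestronglyMeasurable.mul hF)
    (ae_of_all _ fun u => norm_shiftedWeight_mul_le hδ hε hn (hFg u) u)

theorem tendsto_integral_shiftedWeight_mul (hδ : 0 ≤ δ) (hε : ε ^ 2 = 1) {g : ℝ → ℝ}
    (hg : Integrable fun u => (1 + u ^ 2) ^ |s| * g u) {F : ℕ → ℝ → ℝ} {G : ℝ → ℝ}
    (hF : ∀ n, AEStronglyMeasurable (F n)) (hFg : ∀ n u, |F n u| ≤ g u)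
    (hFG : ∀ u, Tendsto (fun n => F n u) atTop (nhds (G u))) :
    Tendsto (fun n => ∫ u, shiftedWeight s δ ε n u * F n u) atTop (nhds (∫ u, G u)) := by
  refine tendsto_integral_filter_of_dominated_convergence _
    (Eventually.of_forall fun n =>
      (measurable_shiftedWeight s δ ε n).aestronglyMeasurable.mul (hF n))
    ?_ (hg.const_mul (4 ^ |s|))
    (ae_of_all _ fun u => by simpa using (tendsto_shiftedWeight hδ hε u).mul (hFG u))
  filter_upwards [eventually_ge_atTop 1] with n hn
  exact ae_of_all _ fun u => norm_shiftedWeight_mul_le hδ hε hn (hFg n u) u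

theorem shiftedWeight_sub_two_mul {n : ℕ} (hn : n ≠ 0) (u : ℝ) :
    shiftedWeight s δ 1 n (u - 2 * (n : ℝ) ^ δ * n) = shiftedWeight s δ (-1) n u := by
  have : (n : ℝ) ^ δ ≠ 0 := by positivity
  unfold shiftedWeight
  congr 4
  field_simp
  ring

theorem abs_norm_sq_le_mul {z : ℂ} {M : ℝ} (hz : ‖z‖ ≤ M) : |‖z‖ ^ 2| ≤ M * ‖z‖ := by
  rw [abs_of_nonneg (by positivity), sq]
  gcongr

theorem abs_real_inner_mul_mul_le {α β : ℂ} (hα : ‖α‖ = 1) (hβ : ‖β‖ = 1) {z w : ℂ} {M : ℝ}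
    (hw : ‖w‖ ≤ M) : |inner ℝ (α * z) (β * w)| ≤ M * ‖z‖ := by
  refine (abs_real_inner_le_norm _ _).trans ?_
  rw [norm_mul, norm_mul, hα, hβ, one_mul, one_mul, mul_comm]
  gcongr

theorem integral_shiftedWeight_mul_norm_sub_sq (h : 𝓢(ℝ, ℂ)) (hδ : 0 ≤ δ) {α β : ℂ}
    (hα : ‖α‖ = 1) (hβ : ‖β‖ = 1) {n : ℕ} (hn : 1 ≤ n) :
    ∫ u, shiftedWeight s δ 1 n u * ‖α * h u - β * h (u + 2 * (n : ℝ) ^ δ * n)‖ ^ 2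
      = (∫ u, shiftedWeight s δ 1 n u * ‖h u‖ ^ 2) + (∫ u, shiftedWeight s δ (-1) n u * ‖h u‖ ^ 2)
        - 2 * ∫ u, shiftedWeight s δ 1 n u *
            inner ℝ (α * h u) (β * h (u + 2 * (n : ℝ) ^ δ * n)) := by
  set d : ℝ := 2 * (n : ℝ) ^ δ * n
  set M := ‖h.toBoundedContinuousFunction‖
  have hM (u : ℝ) : ‖h u‖ ≤ M := h.toBoundedContinuousFunction.norm_coe_le_norm u
  have hg := h.integrable_one_add_sq_rpow_mul_norm |s| M
  have hmain (ε : ℝ) (hε : ε ^ 2 = 1) :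
      Integrable fun u => shiftedWeight s δ ε n u * ‖h u‖ ^ 2 :=
    integrable_shiftedWeight_mul hδ hε hn hg (by fun_prop) fun u => abs_norm_sq_le_mul (hM u)
  have hcross : Integrable fun u =>
      shiftedWeight s δ 1 n u * inner ℝ (α * h u) (β * h (u + d)) :=
    integrable_shiftedWeight_mul hδ (one_pow 2) hn hg (by fun_prop)
      fun u => abs_real_inner_mul_mul_le hα hβ (hM _)
  have hshift : (fun u => shiftedWeight s δ 1 n u * ‖β * h (u + d)‖ ^ 2)
      = fun u => (fun v => shiftedWeight s δ (-1) n v * ‖h v‖ ^ 2) (u + d) := by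
    funext u
    show _ = shiftedWeight s δ (-1) n (u + d) * ‖h (u + d)‖ ^ 2
    rw [← shiftedWeight_sub_two_mul (Nat.one_le_iff_ne_zero.mp hn) (u + d)]
    simp only [d, add_sub_cancel_right, norm_mul, hβ, one_mul]
  have hpt (u : ℝ) : shiftedWeight s δ 1 n u * ‖α * h u - β * h (u + d)‖ ^ 2
      = shiftedWeight s δ 1 n u * ‖h u‖ ^ 2
        - 2 * (shiftedWeight s δ 1 n u * inner ℝ (α * h u) (β * h (u + d)))
        + shiftedWeight s δ 1 n u * ‖β * h (u + d)‖ ^ 2 := by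
    rw [norm_sub_sq_real, norm_mul α, hα, one_mul]
    ring
  have hC : Integrable fun u => shiftedWeight s δ 1 n u * ‖β * h (u + d)‖ ^ 2 := by
    rw [hshift]; exact (hmain (-1) (by norm_num)).comp_add_right d
  rw [integral_congr_ae (ae_of_all _ hpt), integral_add ?_ hC,
    integral_sub (hmain 1 (one_pow 2)) (hcross.const_mul 2), integral_const_mul, hshift,
    integral_add_right_eq_self (fun v => shiftedWeight s δ (-1) n v * ‖h v‖ ^ 2) d]
  · ring
  · exact (hmain 1 (one_pow 2)).sub (hcross.const_mul 2)

theorem tendsto_integral_shiftedWeight_mul_norm_sub_sq (h : 𝓢(ℝ, ℂ)) (hδ : 0 ≤ δ) {α β : ℂ}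
    (hα : ‖α‖ = 1) (hβ : ‖β‖ = 1) :
    Tendsto (fun n : ℕ =>
        ∫ u, shiftedWeight s δ 1 n u * ‖α * h u - β * h (u + 2 * (n : ℝ) ^ δ * n)‖ ^ 2)
      atTop (nhds (2 * ∫ u, ‖h u‖ ^ 2)) := by
  set M := ‖h.toBoundedContinuousFunction‖
  have hM (u : ℝ) : ‖h u‖ ≤ M := h.toBoundedContinuousFunction.norm_coe_le_norm u
  have hg := h.integrable_one_add_sq_rpow_mul_norm |s| M
  have hmain (ε : ℝ) (hε : ε ^ 2 = 1) :
      Tendsto (fun n : ℕ => ∫ u, shiftedWeight s δ ε n u * ‖h u‖ ^ 2) atTop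
        (nhds (∫ u, ‖h u‖ ^ 2)) :=
    tendsto_integral_shiftedWeight_mul hδ hε hg (fun n => by fun_prop)
      (fun n u => abs_norm_sq_le_mul (hM u))
      (fun u => tendsto_const_nhds)
  have hcross : Tendsto (fun n : ℕ => ∫ u, shiftedWeight s δ 1 n u *
      inner ℝ (α * h u) (β * h (u + 2 * (n : ℝ) ^ δ * n))) atTop (nhds 0) := by
    have hshift (u : ℝ) : Tendsto (fun n : ℕ => u + 2 * (n : ℝ) ^ δ * n) atTop atTop := by
      simpa [mul_assoc] using tendsto_atTop_add_const_left _ u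
        ((tendsto_natCast_rpow_mul_self_atTop hδ).const_mul_atTop two_pos)
    have hvanish (u : ℝ) := (h.toZeroAtInfty.zero_at_infty'.comp
      ((hshift u).mono_right atTop_le_cocompact)).norm
    simpa using tendsto_integral_shiftedWeight_mul hδ (one_pow 2) hg (fun n => by fun_prop)
      (fun n u => abs_real_inner_mul_mul_le hα hβ (hM _)) fun u => squeeze_zero_norm
        (fun n => abs_real_inner_mul_mul_le hα hβ le_rfl)
        (by simpa using (hvanish u).mul_const ‖h u‖)
  have hlim := ((hmain 1 (one_pow 2)).add (hmain (-1) (by norm_num))).sub (hcross.const_mul 2)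
  rw [mul_zero, sub_zero, ← two_mul] at hlim
  refine hlim.congr' ?_
  filter_upwards [eventually_ge_atTop 1] with n hn
  exact (integral_shiftedWeight_mul_norm_sub_sq h hδ hα hβ hn).symm

end ShiftedWeight

theorem integral_mul_comp_mul_sub (G : ℝ → ℝ) {a : ℝ} (ha : 0 < a) (b : ℝ) :
    ∫ ξ, a * G (a * (ξ - b)) = ∫ u, G u := by
  rw [integral_const_mul, integral_sub_right_eq_self (fun ξ => G (a * ξ)),
    Measure.integral_comp_mul_left, abs_inv, abs_of_pos ha, smul_eq_mul,
    mul_inv_cancel_left₀ ha.ne']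

theorem integral_one_add_sq_rpow_mul_norm_fourierHat_sq (φ : 𝓢(ℝ, ℝ)) (δ s t : ℝ) {n : ℕ}
    (hn : 1 ≤ n) :
    ∫ ξ, (1 + ξ ^ 2) ^ s * ‖fourierHat (fun x => (((n : ℝ) ^ (-(δ / 2) - s) *
        φ (x / (n : ℝ) ^ δ) * (Real.cos (n * x + 2 * t) - Real.cos (n * x)) : ℝ) : ℂ)) ξ‖ ^ 2
      = Real.sin t ^ 2 * ∫ u, shiftedWeight s δ 1 n u *
          ‖exp (t * I) * schwartzFourierHat (postcompCLM ofRealCLM φ) u - exp (-t * I) *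
            schwartzFourierHat (postcompCLM ofRealCLM φ) (u + 2 * (n : ℝ) ^ δ * n)‖ ^ 2 := by
  set h := schwartzFourierHat (postcompCLM ofRealCLM φ)
  have hh (ξ : ℝ) : fourierHat (fun x => (φ x : ℂ)) ξ = h ξ := by
    rw [schwartzFourierHat_apply]; rfl
  have hn0 : (0 : ℝ) < n := by exact_mod_cast hn
  have hscale : ((n : ℝ) ^ (-(δ / 2) - s)) ^ 2 * ((n : ℝ) ^ δ) ^ 2
      = (n : ℝ) ^ δ * (((n : ℝ) ^ 2) ^ s)⁻¹ := by
    have sq_rpow (x : ℝ) : ((n : ℝ) ^ x) ^ 2 = (n : ℝ) ^ (2 * x) := by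
      rw [← Real.rpow_natCast, ← Real.rpow_mul hn0.le, mul_comm]; norm_num
    rw [sq_rpow, sq_rpow, ← Real.rpow_natCast, ← Real.rpow_mul hn0.le, ← Real.rpow_neg hn0.le,
      ← Real.rpow_add hn0, ← Real.rpow_add hn0]
    ring_nf
  set a := (n : ℝ) ^ δ
  have ha : 0 < a := by positivity
  have hpt (ξ : ℝ) : (1 + ξ ^ 2) ^ s * ‖fourierHat (fun x => (((n : ℝ) ^ (-(δ / 2) - s) *
        φ (x / a) * (Real.cos (n * x + 2 * t) - Real.cos (n * x)) : ℝ) : ℂ)) ξ‖ ^ 2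
      = a * (Real.sin t ^ 2 * (shiftedWeight s δ 1 n (a * (ξ - n)) *
          ‖exp (t * I) * h (a * (ξ - n)) - exp (-t * I) * h (a * (ξ - n) + 2 * a * n)‖ ^ 2)) := by
    rw [fourierHat_const_mul_comp_div_mul_cos_sub_cos φ.integrable ha, hh, hh,
      show a * (ξ - n) + 2 * a * n = a * (ξ + n) by ring, shiftedWeight,
      show (1 : ℝ) * n + a * (ξ - n) / a = ξ by field_simp; ring,
      Real.div_rpow (by positivity) (by positivity)]
    simp only [norm_mul, mul_pow, norm_I, Complex.norm_real, Real.norm_eq_abs, sq_abs, hscale]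
    ring
  rw [integral_congr_ae (ae_of_all _ hpt), ← integral_const_mul]
  exact integral_mul_comp_mul_sub (fun u => Real.sin t ^ 2 * (shiftedWeight s δ 1 n u *
    ‖exp (t * I) * h u - exp (-t * I) * h (u + 2 * a * n)‖ ^ 2)) ha n

theorem hs_norm_limit_cos_difference_general (φ : SchwartzMap ℝ ℝ) (δ : ℝ) (hδ : 0 < δ)
    (s : ℝ) (t : ℝ) :
    Tendsto
      (fun n : ℕ =>
        hsNorm s (fun x =>
          (n : ℝ) ^ (-(δ/2) - s) * φ (x / (n : ℝ) ^ δ) *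
            (Real.cos ((n : ℝ) * x + 2 * t) - Real.cos ((n : ℝ) * x))))
      atTop (nhds (Real.sqrt 2 * |Real.sin t| * l2Norm (fun x => φ x))) := by
  set h := schwartzFourierHat (postcompCLM ofRealCLM φ)
  have hβ : ‖exp (-t * I)‖ = 1 := by simpa using norm_exp_ofReal_mul_I (-t)
  have hlim := ((tendsto_integral_shiftedWeight_mul_norm_sub_sq (s := s) h hδ.le
    (norm_exp_ofReal_mul_I t) hβ).const_mul (Real.sin t ^ 2)).sqrt
  have hL2 : ∫ u, ‖h u‖ ^ 2 = l2Norm (fun x => φ x) ^ 2 := by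
    rw [integral_norm_sq_schwartzFourierHat, l2Norm, ← Real.sqrt_eq_rpow,
      Real.sq_sqrt (integral_nonneg fun x => sq_nonneg _)]
    simp [postcompCLM_apply]
  have hval : Real.sqrt (Real.sin t ^ 2 * (2 * ∫ u, ‖h u‖ ^ 2))
      = Real.sqrt 2 * |Real.sin t| * l2Norm (fun x => φ x) := by
    have hL : 0 ≤ l2Norm (fun x => φ x) :=
      Real.rpow_nonneg (integral_nonneg fun x => sq_nonneg _) _
    rw [hL2, show Real.sin t ^ 2 * (2 * l2Norm (fun x => φ x) ^ 2)
        = 2 * (|Real.sin t| * l2Norm (fun x => φ x)) ^ 2 by rw [mul_pow, sq_abs]; ring,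
      Real.sqrt_mul zero_le_two, Real.sqrt_sq (by positivity), mul_assoc]
  rw [← hval]
  refine hlim.congr' ?_
  filter_upwards [eventually_ge_atTop 1] with n hn
  rw [hsNorm, integral_one_add_sq_rpow_mul_norm_fourierHat_sq φ δ s t hn, Real.sqrt_eq_rpow]

/-- for a Schwartz function `φ`, `δ > 0`, `s ≥ 0` and `t ∈ ℝ`,
`lim_{n→∞} ‖n^{-δ/2-s} φ(x/n^δ)(cos(nx+2t) - cos(nx))‖_{H^s} = √2 |sin t| ‖φ‖_{L²}`. -/
theorem hs_norm_limit_cos_difference (φ : SchwartzMap ℝ ℝ) (δ : ℝ) (hδ : 0 < δ)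
    (s : ℝ) (hs : 0 ≤ s) (t : ℝ) :
    Tendsto
      (fun n : ℕ =>
        hsNorm s (fun x =>
          (n : ℝ) ^ (-(δ/2) - s) * φ (x / (n : ℝ) ^ δ) *
            (Real.cos ((n : ℝ) * x + 2 * t) - Real.cos ((n : ℝ) * x))))
      atTop (nhds (Real.sqrt 2 * |Real.sin t| * l2Norm (fun x => φ x))) :=
  hs_norm_limit_cos_difference_general φ δ hδ s t
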